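/- arXiv:1704.06845 — 2 statements merged into one kernel-verified Lean document; each statement's English description precedes it below -/
import Mathlib

section
/- Let Γ be a group and H ≤ Γ a subgroup of infinite index. For r ∈ ℝ, define φ_r : Γ → ℝ by φ_r(x) = 1 if x ∈ H and φ_r(x) = r otherwise. Then φ_r is positive definite on Γ if and only if 0 ≤ r ≤ 1. -/
/-!
Write `φ_r = r • 1 + (1 - r) • 𝟙_H`. The constant `1` is positive definite, and so is `𝟙_H`,
because `𝟙_H (y⁻¹ * x) = [x H = y H]` is a sum over the cosets `c` of the rank-one kernels
`[x ∈ c] [y ∈ c]`; hence `φ_r` is positive definite for `0 ≤ r ≤ 1`. Conversely, testing with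
`α = δ_1 - δ_g` for some `g ∉ H` gives `2 - 2r ≥ 0`, and testing with `α = 1` on `n` elements of
distinct cosets, which exist for every `n` since `H` has infinite index, gives
`n (1 + (n - 1) r) ≥ 0` for all `n`, which forces `r ≥ 0`.
-/

open scoped ComplexOrder

/-- A function `φ : Γ → ℂ` is positive definite if for every finitely supported `α`,
`∑_{x,y} φ(y⁻¹ x) α(x) conj(α(y))` is a nonnegative (real) number. -/
def IsPosDef {Γ : Type*} [Group Γ] (φ : Γ → ℂ) : Prop :=
  ∀ (s : Finset Γ) (α : Γ → ℂ),
    0 ≤ ∑ x ∈ s, ∑ y ∈ s, φ (y⁻¹ * x) * α x * (starRingEnd ℂ) (α y)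

open Finset ComplexConjugate

theorem sum_sum_ite_eq_mul_conj_nonneg {ι κ : Type*} [DecidableEq κ] (f : ι → κ)
    (s : Finset ι) (α : ι → ℂ) :
    0 ≤ ∑ x ∈ s, ∑ y ∈ s, (if f y = f x then (1 : ℂ) else 0) * α x * conj (α y) := by
  have hfiber : ∀ x ∈ s, ∀ y ∈ s,
      (if f y = f x then (1 : ℂ) else 0) * α x * conj (α y)
        = ∑ c ∈ s.image f, (if f x = c then α x else 0) * conj (if f y = c then α y else 0) := by
    intro x _ y hy
    simp only [apply_ite conj, map_zero, ite_mul, zero_mul, mul_ite, mul_zero]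
    rw [sum_ite_eq, if_pos (mem_image_of_mem f hy)]
    split_ifs <;> simp_all
  calc (0 : ℂ)
      ≤ ∑ c ∈ s.image f, (∑ x ∈ s, if f x = c then α x else 0)
          * conj (∑ y ∈ s, if f y = c then α y else 0) :=
        sum_nonneg fun c _ => by rw [starRingEnd_apply]; exact mul_star_self_nonneg _
    _ = _ := by
        simp only [map_sum, sum_mul_sum]
        rw [sum_comm]
        refine sum_congr rfl fun x hx => ?_
        rw [sum_comm]
        exact sum_congr rfl fun y hy => (hfiber x hx y hy).symm

section

variable {Γ : Type*} [Group Γ]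

theorem isPosDef_one : IsPosDef (fun _ : Γ => (1 : ℂ)) := fun s α => by
  simp only [one_mul]
  rw [← sum_mul_sum, ← map_sum, starRingEnd_apply]
  exact mul_star_self_nonneg _

theorem isPosDef_ite_mem (H : Subgroup Γ) [DecidablePred (· ∈ H)] :
    IsPosDef (fun x => if x ∈ H then (1 : ℂ) else 0) := fun s α => by
  classical
  simpa only [← QuotientGroup.eq] using
    sum_sum_ite_eq_mul_conj_nonneg (QuotientGroup.mk : Γ → Γ ⧸ H) s α

theorem IsPosDef.add {φ ψ : Γ → ℂ} (hφ : IsPosDef φ) (hψ : IsPosDef ψ) :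
    IsPosDef (fun x => φ x + ψ x) := fun s α => by
  simpa only [add_mul, sum_add_distrib] using add_nonneg (hφ s α) (hψ s α)

theorem IsPosDef.real_mul {φ : Γ → ℂ} (hφ : IsPosDef φ) {c : ℝ} (hc : 0 ≤ c) :
    IsPosDef (fun x => c * φ x) := fun s α => by
  simpa only [mul_assoc, ← mul_sum] using
    mul_nonneg (Complex.zero_le_real.mpr hc) (by simpa only [mul_assoc] using hφ s α)

theorem IsPosDef.sum_sum_nonneg {φ : Γ → ℂ} (hφ : IsPosDef φ) (s : Finset Γ) :
    0 ≤ ∑ x ∈ s, ∑ y ∈ s, φ (y⁻¹ * x) := by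
  simpa using hφ s 1

theorem IsPosDef.apply_add_apply_inv_le {φ : Γ → ℂ} (hφ : IsPosDef φ) (g : Γ) :
    φ g + φ g⁻¹ ≤ 2 * φ 1 := by
  classical
  obtain rfl | hg := eq_or_ne g 1
  · simp [two_mul]
  have := hφ {1, g} (fun x => if x = 1 then 1 else -1)
  rw [sum_pair hg.symm, sum_pair hg.symm, sum_pair hg.symm] at this
  simp only [inv_one, mul_one, ↓reduceIte, map_one, hg, map_neg, mul_neg, one_mul,
    inv_mul_cancel, neg_neg] at this
  linear_combination this

theorem Subgroup.exists_finset_card_eq_injOn_mk {H : Subgroup Γ} (hH : H.index = 0) (n : ℕ) :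
    ∃ s : Finset Γ, #s = n ∧ Set.InjOn (QuotientGroup.mk : Γ → Γ ⧸ H) s := by
  classical
  have := Subgroup.index_eq_zero_iff_infinite.mp hH
  obtain ⟨t, rfl⟩ := Infinite.exists_subset_card_eq (Γ ⧸ H) n
  have hout : Function.LeftInverse (QuotientGroup.mk : Γ → Γ ⧸ H) Quotient.out :=
    Quotient.out_eq
  refine ⟨t.image Quotient.out, card_image_of_injective _ hout.injective, ?_⟩
  rw [coe_image]
  exact (Function.LeftInverse.injective (g := id) hout).injOn_range.mono
    (Set.image_subset_range _ _)

theorem sum_sum_ite_mem_of_injOn_mk (H : Subgroup Γ) [DecidablePred (· ∈ H)] {s : Finset Γ}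
    (hs : Set.InjOn (QuotientGroup.mk : Γ → Γ ⧸ H) s) (a b : ℂ) :
    ∑ x ∈ s, ∑ y ∈ s, (if y⁻¹ * x ∈ H then a else b) = #s * (a - b + #s * b) := by
  classical
  have hinner : ∀ x ∈ s, ∑ y ∈ s, (if y⁻¹ * x ∈ H then a else b) = a - b + #s * b := by
    intro x hx
    calc ∑ y ∈ s, (if y⁻¹ * x ∈ H then a else b)
        = ∑ y ∈ s, (b + if x = y then a - b else 0) := by
          refine sum_congr rfl fun y hy => ?_
          have : y⁻¹ * x ∈ H ↔ x = y := (QuotientGroup.eq.symm).trans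
            ⟨fun h => hs hx hy h.symm, fun h => h ▸ rfl⟩
          split_ifs <;> simp_all
      _ = a - b + #s * b := by
          rw [sum_add_distrib, sum_ite_eq, if_pos hx, sum_const, nsmul_eq_mul, add_comm]
  rw [sum_congr rfl hinner, sum_const, nsmul_eq_mul]

theorem nonneg_of_forall_nat_mul_one_sub_add_mul_nonneg {r : ℝ}
    (h : ∀ n : ℕ, 0 ≤ n * (1 - r + n * r)) : 0 ≤ r := by
  by_contra! hr
  obtain ⟨n, hn⟩ := exists_nat_gt (1 - 1 / r)
  have h1 : (1 : ℝ) < n := by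
    have : 0 < -(1 / r) := by rw [neg_pos]; exact one_div_neg.mpr hr
    linarith
  have h2 : n * r < r - 1 := by
    have := mul_lt_mul_of_neg_right hn hr
    rwa [sub_mul, one_div_mul_cancel hr.ne, one_mul] at this
  nlinarith [h n]

end

/-- Infinite index is expressed as `H.index = 0`, the junk value of `Subgroup.index`. -/
theorem stmt_1 {Γ : Type*} [Group Γ] (H : Subgroup Γ) (hd : H.index = 0)
    (r : ℝ) [DecidablePred (· ∈ H)] :
    IsPosDef (fun x => if x ∈ H then (1 : ℂ) else (r : ℂ)) ↔ 0 ≤ r ∧ r ≤ 1 := by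
  constructor
  · intro hφ
    constructor
    · refine nonneg_of_forall_nat_mul_one_sub_add_mul_nonneg fun n => ?_
      obtain ⟨s, rfl, hs⟩ := H.exists_finset_card_eq_injOn_mk hd n
      have := hφ.sum_sum_nonneg s
      rw [sum_sum_ite_mem_of_injOn_mk H hs] at this
      exact_mod_cast this
    · obtain ⟨g, hg⟩ := SetLike.exists_not_mem_of_ne_top H (by rintro rfl; simp at hd)
      have := hφ.apply_add_apply_inv_le g
      simp only [hg, inv_mem_iff, one_mem, if_false, if_true] at this
      have : r + r ≤ 2 * 1 := by exact_mod_cast this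
      linarith
  · rintro ⟨hr0, hr1⟩
    have hsplit : (fun x => if x ∈ H then (1 : ℂ) else (r : ℂ))
        = fun x => (r : ℂ) * 1 + ((1 - r : ℝ) : ℂ) * (if x ∈ H then (1 : ℂ) else 0) := by
      funext x
      split_ifs <;> push_cast <;> ring
    rw [hsplit]
    exact (isPosDef_one.real_mul hr0).add ((isPosDef_ite_mem H).real_mul (sub_nonneg.mpr hr1))
end

section
/- Let W be a finite Coxeter group with generating set S. Then ∑_{w ∈ W} (-1)^{|w|} ∏_{s ∈ S_w} q_s = ∏_{s ∈ S} (1 − q_s). -/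
variable {B W : Type*} [Group W] {M : CoxeterMatrix B}

/-- The (standard) parabolic subgroup generated by the simple reflections indexed by `T`. -/
def parabolic (cs : CoxeterSystem M W) (T : Set B) : Subgroup W :=
  Subgroup.closure (cs.simple '' T)

/-- The colour `S_w` of `w`: `s ∈ S_w` iff `w ∉ W_{S∖{s}}`. -/
def colour (cs : CoxeterSystem M W) (w : W) : Set B :=
  {i | w ∉ parabolic cs {j | j ≠ i}}

/-!
Expanding `∏_{s ∈ S_w} q_s = ∑_{T ⊇ S_w} ∏_{s ∈ T} q_s ∏_{s ∉ T} (1 - q_s)` reduces the identity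
to `∑_{S_w ⊆ T} (-1)^{|w|} = [T = ∅]`. If `s ∈ T`, then `w ↦ w s` preserves `{w | S_w ⊆ T}` and
changes the parity of `|w|`, so the sum vanishes. For `T = ∅` one needs that `S_w = ∅` forces
`w = 1`. An element `w ≠ 1` has a right descent `s`. By Tits' sign representation, `s` then lies in
the right inversion sequence of every word for `w`. In particular it lies in that of a word avoiding
`s`, which would put `s` in `W_{S∖{s}}`. The geometric representation rules this out: `W_{S∖{s}}`
fixes the `s`-coordinate, whereas `s` negates `α_s`.
-/

theorem mul_mul_inv_eq_iff_eq_inv_mul_mul {G : Type*} [Group G] {a t x : G} :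
    a * t * a⁻¹ = x ↔ t = a⁻¹ * x * a := by
  constructor <;> rintro rfl <;> group

theorem Complex.exp_ofReal_mul_I_sq (θ : ℝ) :
    exp (θ * I) ^ 2 = 2 * Real.cos θ * exp (θ * I) - 1 := by
  have hinv : exp (-(θ * I)) * exp (θ * I) = 1 := by rw [← exp_add, neg_add_cancel, exp_zero]
  rw [ofReal_cos, cos, neg_mul]
  linear_combination -hinv

theorem Complex.exp_ofReal_pi_div_mul_I_pow_two_mul {m : ℕ} (hm : m ≠ 0) :
    exp ((Real.pi / m : ℝ) * I) ^ (2 * m) = 1 := by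
  rw [← exp_nat_mul, ← exp_two_pi_mul_I]
  congr 1
  push_cast
  field_simp

theorem Finset.prod_eq_sum_superset_prod_mul_prod_compl {ι R : Type*} [Fintype ι] [DecidableEq ι]
    [CommRing R] (q : ι → R) (C : Finset ι) :
    ∏ i ∈ C, q i = ∑ T with C ⊆ T, (∏ i ∈ T, q i) * ∏ i ∈ Tᶜ, (1 - q i) := by
  have hsplit : ∏ i ∈ C, q i = ∏ i, (q i + if i ∈ C then 0 else 1 - q i) := by
    have h : ∀ i, (q i + if i ∈ C then 0 else 1 - q i) = if i ∈ C then q i else 1 := fun i => by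
      split_ifs <;> ring
    simp_rw [h, Finset.prod_ite_mem, Finset.univ_inter]
  rw [hsplit, Finset.prod_add, Finset.powerset_univ, Finset.sum_filter]
  refine Finset.sum_congr rfl fun T _ => ?_
  split_ifs with hCT
  · rw [Finset.compl_eq_univ_sdiff]
    refine congrArg _ (Finset.prod_congr rfl fun i hi => ?_)
    rw [if_neg fun hiC => (Finset.mem_sdiff.mp hi).2 (hCT hiC)]
  · obtain ⟨i, hiC, hiT⟩ := Finset.not_subset.mp hCT
    refine mul_eq_zero_of_right _ (Finset.prod_eq_zero (Finset.mem_sdiff.mpr ⟨mem_univ i, hiT⟩) ?_)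
    rw [if_pos hiC]

namespace Module

variable {V : Type*} [AddCommGroup V] [Module ℝ V] {x y : V} {f g : Dual ℝ V}

theorem reflection_mul_reflection_pow_apply_sub_mem_span (hf : f x = 2) (hg : g y = 2) (k : ℕ)
    (v : V) : ((reflection hf * reflection hg) ^ k) v - v ∈ Submodule.span ℝ {x, y} := by
  induction k with
  | zero => simp
  | succ k ih =>
    have hstep : ∀ u, (reflection hf * reflection hg) u - u ∈ Submodule.span ℝ {x, y} := fun u => by
      rw [Submodule.mem_span_pair]
      refine ⟨-f (u - g u • y), -g u, ?_⟩
      simp only [LinearEquiv.mul_apply, reflection_apply]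
      module
    simpa [pow_succ', sub_add_sub_cancel] using
      Submodule.add_mem _ (hstep (((reflection hf * reflection hg) ^ k) v)) ih

open Complex in
theorem reflection_mul_reflection_pow_apply_rotation (hf : f x = 2) (hg : g y = 2) {c : ℝ}
    (hfy : f y = -2 * c) (hgx : g x = -2 * c) {ζ : ℂ} (hζ : ζ ^ 2 = 2 * c * ζ - 1) (k : ℕ)
    (v : V) :
    (f (((reflection hf * reflection hg) ^ k) v) : ℂ) +
        ζ * g (((reflection hf * reflection hg) ^ k) v) = ζ ^ (2 * k) * (f v + ζ * g v) := by
  induction k generalizing v with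
  | zero => simp
  | succ k ih =>
    rw [pow_succ, LinearEquiv.mul_apply, ih, LinearEquiv.mul_apply]
    simp only [reflection_apply, map_sub, map_smul, smul_eq_mul, hf, hg, hfy, hgx]
    push_cast
    linear_combination ζ ^ (2 * k) * (-↑(g v) * ζ - ↑(f v) - 2 * c * ↑(g v)) * hζ

/- `f + ζ g` turns `r_f r_g` into multiplication by `ζ² = e^{2πi/m}`, so it kills
`(r_f r_g)^m v - v`; that vector lies in `span {x, y}`, where `f + ζ g` is injective. -/
open Complex in
theorem reflection_mul_reflection_pow_eq_one (hf : f x = 2) (hg : g y = 2) {m : ℕ} (hm : 2 ≤ m)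
    (hfy : f y = -2 * Real.cos (Real.pi / m)) (hgx : g x = -2 * Real.cos (Real.pi / m)) :
    (reflection hf * reflection hg) ^ m = 1 := by
  set θ := Real.pi / m
  have hsin : Real.sin θ ≠ 0 := by
    refine (Real.sin_pos_of_pos_of_lt_pi (by positivity) ?_).ne'
    exact div_lt_self Real.pi_pos (by exact_mod_cast hm)
  have hζm := exp_ofReal_pi_div_mul_I_pow_two_mul (by omega : m ≠ 0)
  obtain ⟨c, hc⟩ : ∃ c, Real.cos θ = c := ⟨_, rfl⟩
  rw [hc] at hfy hgx
  have hζ := exp_ofReal_mul_I_sq θ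
  rw [hc] at hζ
  ext v
  obtain ⟨a, b, hab⟩ :=
    Submodule.mem_span_pair.mp (reflection_mul_reflection_pow_apply_sub_mem_span hf hg m v)
  have hzero : (f (a • x + b • y) : ℂ) + exp (θ * I) * g (a • x + b • y) = 0 := by
    rw [hab, map_sub, map_sub, ofReal_sub, ofReal_sub, mul_sub, sub_add_sub_comm,
      reflection_mul_reflection_pow_apply_rotation hf hg hfy hgx hζ, hζm, one_mul, sub_self]
  have him := congrArg im hzero
  have hre := congrArg re hzero
  simp only [map_add, map_smul, hf, hg, hfy, hgx, smul_eq_mul, add_im, add_re, mul_im, mul_re,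
    ofReal_re, ofReal_im, exp_ofReal_mul_I_re, exp_ofReal_mul_I_im, hc, zero_re, zero_im, mul_zero,
    zero_add, sub_zero] at him hre
  have hb : b = c * a := by linarith [(mul_eq_zero.mp him).resolve_left hsin]
  have ha : a = 0 := by
    have h : 2 * a * Real.sin θ ^ 2 = 0 := by
      rw [Real.sin_sq, hc]
      linear_combination hre
    simpa [hsin] using h
  show ((reflection hf * reflection hg) ^ m) v = v
  rw [← sub_eq_zero, ← hab, hb, ha]
  simp

end Module

namespace CoxeterMatrix

variable (M)

/-- The coroot `2 B(α_i, -)` of the geometric representation. For `M i j = 0` (no braid relation)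
Lean's `π / 0 = 0` gives the coefficient `-2`, the usual value `-2 cos (π / ∞)`. -/
noncomputable def simpleCoroot (i : B) : Module.Dual ℝ (B →₀ ℝ) :=
  Finsupp.linearCombination ℝ fun j => -2 * Real.cos (Real.pi / M i j)

theorem simpleCoroot_single (i j : B) :
    M.simpleCoroot i (Finsupp.single j 1) = -2 * Real.cos (Real.pi / M i j) := by
  simp [simpleCoroot]

theorem simpleCoroot_single_self (i : B) : M.simpleCoroot i (Finsupp.single i 1) = 2 := by
  simp [simpleCoroot_single]

noncomputable def geometricReflection (i : B) : (B →₀ ℝ) ≃ₗ[ℝ] (B →₀ ℝ) :=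
  Module.reflection (M.simpleCoroot_single_self i)

theorem geometricReflection_apply_of_ne {i j : B} (h : j ≠ i) (v : B →₀ ℝ) :
    M.geometricReflection i v j = v j := by
  simp [geometricReflection, Module.reflection_apply, h.symm]

theorem geometricReflection_single_self (i : B) :
    M.geometricReflection i (Finsupp.single i 1) = -Finsupp.single i 1 :=
  Module.reflection_apply_self _

theorem isLiftable_geometricReflection : M.IsLiftable M.geometricReflection := by
  intro i j
  obtain rfl | hij := eq_or_ne i j
  · rw [M.diagonal, pow_one]
    exact mul_eq_one_iff_eq_inv.mpr (Module.reflection_inv _).symm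
  obtain hm | hm := eq_or_ne (M i j) 0
  · rw [hm, pow_zero]
  refine Module.reflection_mul_reflection_pow_eq_one _ _ ?_ (M.simpleCoroot_single i j) ?_
  · have := M.off_diagonal i j hij
    omega
  · rw [simpleCoroot_single, M.symmetric]

end CoxeterMatrix

namespace CoxeterSystem

variable (cs : CoxeterSystem M W)

local prefix:100 "s" => cs.simple
local prefix:100 "π" => cs.wordProd
local prefix:100 "ℓ" => cs.length
local prefix:100 "ris" => cs.rightInvSeq

theorem simple_mul_mul_simple_eq_iff (i : B) {t x : W} :
    s i * t * s i = x ↔ t = s i * x * s i := by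
  simpa using mul_mul_inv_eq_iff_eq_inv_mul_mul (a := s i) (t := t) (x := x)

open Classical in
noncomputable def signFlip (i : B) : Equiv.Perm (W × ℤˣ) :=
  Function.Involutive.toPerm (fun x => (s i * x.1 * s i, if x.1 = s i then -x.2 else x.2)) <| by
    rintro ⟨t, ε⟩
    by_cases ht : t = s i
    · simp [ht]
    · simp [ht, mul_assoc, mul_eq_one_iff_eq_inv]

open Classical in
@[simp]
theorem signFlip_apply (i : B) (t : W) (ε : ℤˣ) :
    cs.signFlip i (t, ε) = (s i * t * s i, if t = s i then -ε else ε) :=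
  rfl

open Classical in
theorem signFlip_mul_pow_apply (i j : B) (k : ℕ) (t : W) (ε : ℤˣ) :
    ((cs.signFlip i * cs.signFlip j) ^ k) (t, ε) =
      ((s i * s j) ^ k * t * ((s i * s j) ^ k)⁻¹,
        (∏ r ∈ Finset.range (2 * k),
          if t = ((s i * s j) ^ (r + 1))⁻¹ * s i then -1 else 1) * ε) := by
  set p := s i * s j with hp
  have hsp : ∀ n : ℕ, s i * p ^ n = (p ^ n)⁻¹ * s i := fun n => by
    rw [← inv_pow]
    refine SemiconjBy.pow_right ?_ n
    simp [SemiconjBy, p, ← mul_assoc]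
  have hconj : ∀ n k : ℕ, (p ^ k)⁻¹ * ((p ^ n)⁻¹ * s i) * p ^ k = (p ^ (2 * k + n))⁻¹ * s i := by
    intro n k
    rw [mul_assoc, mul_assoc, hsp, two_mul, pow_add, pow_add]
    group
  induction k generalizing t ε with
  | zero => simp
  | succ k ih =>
    have h1 : p ^ k * t * (p ^ k)⁻¹ = s j ↔ t = (p ^ (2 * k + 1))⁻¹ * s i := by
      rw [mul_mul_inv_eq_iff_eq_inv_mul_mul, ← hconj, pow_one]
      simp [p, mul_assoc]
    have h2 : s j * (p ^ k * t * (p ^ k)⁻¹) * s j = s i ↔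
        t = (p ^ (2 * k + 2))⁻¹ * s i := by
      rw [simple_mul_mul_simple_eq_iff, mul_mul_inv_eq_iff_eq_inv_mul_mul, ← hconj]
      simp [p, pow_two, mul_assoc]
    rw [pow_succ', Equiv.Perm.mul_apply, ih, Equiv.Perm.mul_apply, signFlip_apply,
      signFlip_apply, Prod.mk.injEq]
    constructor
    · simp only [pow_succ', mul_inv_rev, hp, inv_simple, mul_assoc]
    · rw [(by ring : 2 * (k + 1) = 2 * k + 1 + 1), Finset.prod_range_succ, Finset.prod_range_succ,
        h1, h2]
      split_ifs <;> simp

theorem isLiftable_signFlip : M.IsLiftable cs.signFlip := by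
  classical
  intro i j
  ext ⟨t, ε⟩ : 1
  have hpm : (s i * s j) ^ M i j = 1 := cs.simple_mul_simple_pow i j
  have hper : ∀ r, ((s i * s j) ^ (M i j + r + 1))⁻¹ = ((s i * s j) ^ (r + 1))⁻¹ := fun r => by
    rw [add_assoc, pow_add, hpm, one_mul]
  rw [signFlip_mul_pow_apply, two_mul, Finset.prod_range_add]
  simp [hpm, hper, ← sq]

noncomputable def signRep : W →* Equiv.Perm (W × ℤˣ) :=
  cs.lift ⟨cs.signFlip, cs.isLiftable_signFlip⟩

@[simp]
theorem signRep_simple (i : B) : cs.signRep (s i) = cs.signFlip i :=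
  cs.lift_apply_simple cs.isLiftable_signFlip i

open Classical in
theorem signRep_wordProd_apply (ω : List B) (t : W) (ε : ℤˣ) :
    cs.signRep (π ω) (t, ε) = (π ω * t * (π ω)⁻¹, (-1) ^ (ris ω).count t * ε) := by
  induction ω generalizing t ε with
  | nil => simp
  | cons i ω ih =>
    rw [wordProd_cons, map_mul, Equiv.Perm.mul_apply, ih, signRep_simple, signFlip_apply,
      rightInvSeq, List.count_cons, Prod.mk.injEq, mul_mul_inv_eq_iff_eq_inv_mul_mul]
    constructor
    · simp [mul_assoc]
    · by_cases ht : t = (π ω)⁻¹ * s i * π ω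
      · simp [ht, pow_succ]
      · simp [ht, Ne.symm ht]

noncomputable def inversionSign (w t : W) : ℤˣ := (cs.signRep w (t, 1)).2

open Classical in
theorem inversionSign_wordProd (ω : List B) (t : W) :
    cs.inversionSign (π ω) t = (-1) ^ (ris ω).count t := by
  simp [inversionSign, signRep_wordProd_apply]

theorem signRep_apply (w t : W) (ε : ℤˣ) :
    cs.signRep w (t, ε) = (w * t * w⁻¹, cs.inversionSign w t * ε) := by
  classical
  obtain ⟨ω, rfl⟩ := cs.wordProd_surjective w
  simp [inversionSign, signRep_wordProd_apply, mul_comm]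

theorem inversionSign_self {t : W} (ht : cs.IsReflection t) : cs.inversionSign t t = -1 := by
  obtain ⟨w, i, rfl⟩ := ht
  have hback : w⁻¹ * (w * s i * w⁻¹) * w⁻¹⁻¹ = s i := by group
  have hcancel : cs.signRep w (cs.signRep w⁻¹ (w * s i * w⁻¹, 1)) = (w * s i * w⁻¹, 1) := by
    rw [← Equiv.Perm.mul_apply, ← map_mul, mul_inv_cancel, map_one, Equiv.Perm.one_apply]
  rw [signRep_apply _ w⁻¹, hback, signRep_apply, Prod.mk.injEq] at hcancel
  rw [inversionSign, map_mul, map_mul, Equiv.Perm.mul_apply, Equiv.Perm.mul_apply,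
    signRep_apply _ w⁻¹, hback, signRep_simple, signFlip_apply, if_pos rfl,
    simple_mul_simple_cancel_right, signRep_apply, mul_neg, hcancel.2]

theorem mem_rightInvSeq_of_inversionSign_eq_neg_one {ω : List B} {t : W}
    (h : cs.inversionSign (π ω) t = -1) : t ∈ ris ω := by
  classical
  refine List.count_pos_iff.mp (Nat.pos_of_ne_zero fun h0 => ?_)
  rw [inversionSign_wordProd, h0, pow_zero] at h
  exact absurd h (by decide)

theorem isRightInversion_of_inversionSign_eq_neg_one {w t : W}
    (h : cs.inversionSign w t = -1) : cs.IsRightInversion w t := by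
  obtain ⟨ω, hω, rfl⟩ := cs.exists_isReduced w
  exact cs.isRightInversion_of_mem_rightInvSeq hω (cs.mem_rightInvSeq_of_inversionSign_eq_neg_one h)

theorem inversionSign_eq_neg_one_of_isRightInversion {w t : W} (h : cs.IsRightInversion w t) :
    cs.inversionSign w t = -1 := by
  refine (Int.units_eq_one_or _).resolve_left fun h1 => lt_asymm h.2 ?_
  have hwt : cs.inversionSign (w * t) t = -1 := by
    rw [inversionSign, map_mul, Equiv.Perm.mul_apply, signRep_apply _ t, inversionSign_self cs h.1,
      signRep_apply, mul_inv_cancel_right, h1]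
    rfl
  simpa [mul_assoc, h.1.mul_self] using (cs.isRightInversion_of_inversionSign_eq_neg_one hwt).2

theorem mem_rightInvSeq_of_isRightInversion {ω : List B} {t : W}
    (h : cs.IsRightInversion (π ω) t) : t ∈ ris ω :=
  cs.mem_rightInvSeq_of_inversionSign_eq_neg_one (cs.inversionSign_eq_neg_one_of_isRightInversion h)

noncomputable def geometricRep : W →* (B →₀ ℝ) ≃ₗ[ℝ] (B →₀ ℝ) :=
  cs.lift ⟨M.geometricReflection, M.isLiftable_geometricReflection⟩

@[simp]
theorem geometricRep_simple (i : B) : cs.geometricRep (s i) = M.geometricReflection i :=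
  cs.lift_apply_simple M.isLiftable_geometricReflection i

theorem geometricRep_apply_of_mem_parabolic {T : Set B} {i : B} (hi : i ∉ T) {w : W}
    (hw : w ∈ parabolic cs T) (v : B →₀ ℝ) : cs.geometricRep w v i = v i := by
  induction hw using Subgroup.closure_induction generalizing v with
  | mem x hx =>
    obtain ⟨j, hj, rfl⟩ := hx
    rw [geometricRep_simple]
    exact M.geometricReflection_apply_of_ne (ne_of_mem_of_not_mem hj hi).symm v
  | one => simp
  | mul x y _ _ hx hy => rw [map_mul, LinearEquiv.mul_apply, hx, hy]
  | inv x _ hx => rw [← hx, ← LinearEquiv.mul_apply, ← map_mul, mul_inv_cancel, map_one]; rfl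

theorem simple_notMem_parabolic {T : Set B} {i : B} (hi : i ∉ T) : s i ∉ parabolic cs T := by
  intro h
  have := cs.geometricRep_apply_of_mem_parabolic hi h (Finsupp.single i 1)
  rw [geometricRep_simple, M.geometricReflection_single_self] at this
  norm_num at this

theorem wordProd_mem_parabolic {T : Set B} {ω : List B} (h : ∀ i ∈ ω, i ∈ T) :
    π ω ∈ parabolic cs T := by
  induction ω with
  | nil => exact one_mem _
  | cons i ω ih =>
    rw [wordProd_cons]
    exact mul_mem (Subgroup.subset_closure ⟨i, h i (by simp), rfl⟩)
      (ih fun j hj => h j (by simp [hj]))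

theorem exists_wordProd_of_mem_parabolic {T : Set B} {w : W} (hw : w ∈ parabolic cs T) :
    ∃ ω : List B, (∀ i ∈ ω, i ∈ T) ∧ π ω = w := by
  induction hw using Subgroup.closure_induction_left with
  | one => exact ⟨[], by simp, rfl⟩
  | mul_left x hx y _ ih =>
    obtain ⟨i, hi, rfl⟩ := hx
    obtain ⟨ω, hω, rfl⟩ := ih
    exact ⟨i :: ω, by simpa [hi] using hω, rfl⟩
  | inv_mul_cancel x hx y _ ih =>
    obtain ⟨i, hi, rfl⟩ := hx
    obtain ⟨ω, hω, rfl⟩ := ih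
    exact ⟨i :: ω, by simpa [hi] using hω, by rw [inv_simple]; rfl⟩

theorem mem_parabolic_of_mem_rightInvSeq {T : Set B} {ω : List B} (h : ∀ i ∈ ω, i ∈ T) {t : W}
    (ht : t ∈ ris ω) : t ∈ parabolic cs T := by
  obtain ⟨j, hj, rfl⟩ := List.mem_iff_getElem.mp ht
  have herase := cs.wordProd_mul_getD_rightInvSeq ω j
  rw [List.getD_eq_getElem _ 1 hj] at herase
  rw [← inv_mul_cancel_left (π ω) (ris ω)[j], herase]
  exact mul_mem (inv_mem (cs.wordProd_mem_parabolic h))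
    (cs.wordProd_mem_parabolic fun i hi => h i (List.mem_of_mem_eraseIdx hi))

theorem eq_one_of_forall_mem_parabolic {w : W} (h : ∀ i, w ∈ parabolic cs {j | j ≠ i}) :
    w = 1 := by
  by_contra hw
  obtain ⟨i, hi⟩ := cs.exists_rightDescent_of_ne_one hw
  obtain ⟨ω, hω, rfl⟩ := cs.exists_wordProd_of_mem_parabolic (h i)
  have hinv := (cs.isRightInversion_simple_iff_isRightDescent _ i).mpr hi
  exact cs.simple_notMem_parabolic (by simp)
    (cs.mem_parabolic_of_mem_rightInvSeq hω (cs.mem_rightInvSeq_of_isRightInversion hinv))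

theorem colour_eq_empty_iff {w : W} : colour cs w = ∅ ↔ w = 1 := by
  simp only [colour, Set.eq_empty_iff_forall_notMem, Set.mem_ofPred_eq, not_not]
  exact ⟨cs.eq_one_of_forall_mem_parabolic, by rintro rfl i; exact one_mem _⟩

theorem colour_mul_simple_subset (w : W) (i : B) :
    colour cs (w * s i) ⊆ insert i (colour cs w) := by
  intro j hj
  by_contra hji
  simp only [Set.mem_insert_iff, not_or, colour, Set.mem_ofPred_eq, not_not] at hji
  exact hj (mul_mem hji.2 (Subgroup.subset_closure ⟨i, Ne.symm hji.1, rfl⟩))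

theorem sum_neg_one_pow_length_eq_zero {R : Type*} [Ring R] {A : Finset W} (i : B)
    (hA : ∀ w ∈ A, w * s i ∈ A) : ∑ w ∈ A, (-1 : R) ^ ℓ w = 0 := by
  refine Finset.sum_involution (fun w _ => w * s i) (fun w _ => ?_) (fun w _ _ => ?_) hA
    (fun w _ => cs.simple_mul_simple_cancel_right i)
  · rcases cs.length_mul_simple w i with h | h
    · simp [h, pow_succ]
    · simp [← h, pow_succ]
  · intro h
    simpa [mul_eq_left.mp h] using cs.length_simple i

open Classical in
theorem sum_neg_one_pow_length_colour_subset {R : Type*} [Ring R] [Fintype W] (T : Finset B) :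
    ∑ w with colour cs w ⊆ T, (-1 : R) ^ ℓ w = if T = ∅ then 1 else 0 := by
  split_ifs with hT
  · have hone : ({w | colour cs w ⊆ ↑T} : Finset W) = {1} := by
      ext w
      simp [hT, colour_eq_empty_iff]
    simp [hone]
  · obtain ⟨i, hi⟩ := Finset.nonempty_iff_ne_empty.mpr hT
    refine cs.sum_neg_one_pow_length_eq_zero i fun w hw => ?_
    rw [Finset.mem_filter] at hw ⊢
    exact ⟨Finset.mem_univ _, (cs.colour_mul_simple_subset w i).trans (Set.insert_subset hi hw.2)⟩

end CoxeterSystem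

/-- For a finite Coxeter group `W`,
`∑_{w ∈ W} (-1)^{|w|} ∏_{s ∈ S_w} q_s = ∏_{s ∈ S} (1 − q_s)`. -/
theorem stmt_14 [Fintype B] [Fintype W] (cs : CoxeterSystem M W) (q : B → ℝ) :
    ∑ w : W, (-1 : ℝ) ^ cs.length w * ∏ᶠ i ∈ colour cs w, q i =
      ∏ i : B, (1 - q i) := by
  classical
  let P : Finset B → ℝ := fun T => (∏ i ∈ T, q i) * ∏ i ∈ Tᶜ, (1 - q i)
  calc ∑ w : W, (-1 : ℝ) ^ cs.length w * ∏ᶠ i ∈ colour cs w, q i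
      = ∑ w : W, ∑ T with (colour cs w).toFinset ⊆ T, (-1 : ℝ) ^ cs.length w * P T := by
        refine Finset.sum_congr rfl fun w _ => ?_
        rw [finprod_mem_eq_toFinset_prod, Finset.prod_eq_sum_superset_prod_mul_prod_compl,
          Finset.mul_sum]
    _ = ∑ T : Finset B, (∑ w with colour cs w ⊆ T, (-1 : ℝ) ^ cs.length w) * P T := by
        simp only [Finset.sum_mul]
        refine Finset.sum_comm' fun w T => ?_
        simp [Set.toFinset_subset]
    _ = P ∅ := by simp [cs.sum_neg_one_pow_length_colour_subset]
    _ = ∏ i, (1 - q i) := by simp [P]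
end
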